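/- Let m ≥ 1 be an integer and write P_μ^m(η) = α + βη + γη² + δη³ + εη⁴ (type I_{1,4}); set F_m(μ) = (ε+δ+γ+β)[(ε+δ+γ)(ε+δ) − εβ] − (2ε+δ)²α, the Hurwitz determinant Δ₃ of P_μ^m. For m > 4, F_m(μ) > 0 for all μ > 0. For 1 ≤ m ≤ 4 and μ > 0, one has [F_m(μ) > 0 and q_m¹(μ) ≥ 0] if and only if μ ≤ μ_m¹, where q_m¹(μ) = (1/((m+1)μ))·(dP_μ^m/dη)(1/2) and μ_m¹ is the unique positive root of q_m¹. -/

import Mathlib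

/-- Degree-0 coefficient `α` of the type `I_{1,4}` representative polynomial. -/
noncomputable def coeffA (μ : ℝ) : ℝ := (1 - μ) * (2 - μ) * (3 - μ) * (4 - μ)

/-- Degree-1 coefficient `β` of the type `I_{1,4}` representative polynomial. -/
noncomputable def coeffB (m : ℕ) (μ : ℝ) : ℝ :=
  5 * ((m : ℝ) + 1) * (1 - μ) * (5 - 3 * μ) * (2 - μ) * μ

/-- Degree-2 coefficient `γ` of the type `I_{1,4}` representative polynomial. -/
noncomputable def coeffC (m : ℕ) (μ : ℝ) : ℝ :=
  5 * ((m : ℝ) + 1) * ((m : ℝ) + 2) * (1 - μ) * (7 - 5 * μ) * μ ^ 2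

/-- Degree-3 coefficient `δ` of the type `I_{1,4}` representative polynomial. -/
noncomputable def coeffD (m : ℕ) (μ : ℝ) : ℝ :=
  10 * ((m : ℝ) + 1) * ((m : ℝ) + 2) * ((m : ℝ) + 3) * (1 - μ) * μ ^ 3

/-- Degree-4 coefficient `ε` of the type `I_{1,4}` representative polynomial. -/
noncomputable def coeffE (m : ℕ) (μ : ℝ) : ℝ :=
  ((m : ℝ) + 1) * ((m : ℝ) + 2) * ((m : ℝ) + 3) * ((m : ℝ) + 4) * μ ^ 4

/-- The representative polynomial `P_μ^m` of type `I_{1,4}` (real variable). -/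
noncomputable def PI14 (m : ℕ) (μ η : ℝ) : ℝ :=
  coeffA μ + coeffB m μ * η + coeffC m μ * η ^ 2 + coeffD m μ * η ^ 3 +
    coeffE m μ * η ^ 4

/-- Hurwitz determinant
`Δ₃ = (ε+δ+γ+β)[(ε+δ+γ)(ε+δ) - εβ] - (2ε+δ)²α` of `P_μ^m` (type `I_{1,4}`). -/
noncomputable def FI14 (m : ℕ) (μ : ℝ) : ℝ :=
  (coeffE m μ + coeffD m μ + coeffC m μ + coeffB m μ) *
      ((coeffE m μ + coeffD m μ + coeffC m μ) * (coeffE m μ + coeffD m μ) -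
        coeffE m μ * coeffB m μ) -
    (2 * coeffE m μ + coeffD m μ) ^ 2 * coeffA μ

/-- `q_m¹(μ) = (1/((m+1)μ))·(dP_μ^m/dη)(1/2)` for type `I_{1,4}`. -/
noncomputable def qI14' (m : ℕ) (μ : ℝ) : ℝ :=
  (1 / (((m : ℝ) + 1) * μ)) * deriv (fun η : ℝ => PI14 m μ η) (1 / 2)

/-!
`F_m(μ)` factors as `(m+1)(m+2)(m+3) μ⁶ H(m, μ)` (`H = hurwitzCofactor`), and after the shift
`m = t + 5` every coefficient of `H` as a polynomial in `t, μ` is positive, which settles `m > 4`.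
For `1 ≤ m ≤ 4`, `q_m¹` is (for `μ > 0`) a cubic with value `50` at `0` that is negative beyond an
explicit `R_m`; by the intermediate value theorem, uniqueness of its positive root `r` makes
`q_m¹(μ) ≥ 0 ↔ μ ≤ r`, and forces `r < R_m`. On `(0, R_m)` the sextic `H(m, ·)` is positive, so
`F_m > 0` is automatic once `μ ≤ r`.
-/

theorem hasDerivAt_PI14 (m : ℕ) (μ η : ℝ) :
    HasDerivAt (PI14 m μ)
      (coeffB m μ + 2 * coeffC m μ * η + 3 * coeffD m μ * η ^ 2 + 4 * coeffE m μ * η ^ 3) η := by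
  have h := (((((hasDerivAt_id η).const_mul (coeffB m μ)).const_add (coeffA μ)).add
    ((hasDerivAt_pow 2 η).const_mul (coeffC m μ))).add
    ((hasDerivAt_pow 3 η).const_mul (coeffD m μ))).add
    ((hasDerivAt_pow 4 η).const_mul (coeffE m μ))
  exact h.congr_deriv (by push_cast; ring)

/-- `q_m¹(μ)` for `μ ≠ 0`, after cancelling the common factor `(m+1)μ` of `β, γ, δ, ε`. -/
noncomputable def qCubic (m μ : ℝ) : ℝ :=
  5 * (1 - μ) * (5 - 3 * μ) * (2 - μ) + 5 * (m + 2) * (1 - μ) * (7 - 5 * μ) * μ +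
    15 / 2 * (m + 2) * (m + 3) * (1 - μ) * μ ^ 2 + 1 / 2 * (m + 2) * (m + 3) * (m + 4) * μ ^ 3

theorem qI14'_eq_qCubic (m : ℕ) {μ : ℝ} (hμ : μ ≠ 0) : qI14' m μ = qCubic m μ := by
  rw [qI14', (hasDerivAt_PI14 m μ _).deriv]
  simp only [coeffB, coeffC, coeffD, coeffE, qCubic]
  field_simp
  ring

noncomputable def hurwitzCofactor (m μ : ℝ) : ℝ :=
  (10600 + 38600 * m + 40600 * m ^ 2 + 12600 * m ^ 3) +
  (-11740 - 34950 * m - 4550 * m ^ 2 + 34950 * m ^ 3 + 16290 * m ^ 4) * μ +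
  (3424 + 4321 * m - 27040 * m ^ 2 - 28950 * m ^ 3 + 7616 * m ^ 4 + 8629 * m ^ 5) * μ ^ 2 +
  (200 + 2800 * m + 10750 * m ^ 2 - 1450 * m ^ 3 - 13350 * m ^ 4 - 1350 * m ^ 5 +
    2400 * m ^ 6) * μ ^ 3 +
  (-200 - 590 * m - 490 * m ^ 2 + 3330 * m ^ 3 + 2300 * m ^ 4 - 2310 * m ^ 5 - 810 * m ^ 6 +
    370 * m ^ 7) * μ ^ 4 +
  (20 - 10 * m - 160 * m ^ 2 - 380 * m ^ 3 + 250 * m ^ 4 + 510 * m ^ 5 - 140 * m ^ 6 -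
    120 * m ^ 7 + 30 * m ^ 8) * μ ^ 5 +
  (5 * m + 10 * m ^ 2 - 34 * m ^ 4 - 6 * m ^ 5 + 30 * m ^ 6 - 6 * m ^ 8 + m ^ 9) * μ ^ 6

theorem FI14_eq (m : ℕ) (μ : ℝ) :
    FI14 m μ = ((m : ℝ) + 1) * ((m : ℝ) + 2) * ((m : ℝ) + 3) * μ ^ 6 * hurwitzCofactor m μ := by
  simp only [FI14, coeffA, coeffB, coeffC, coeffD, coeffE, hurwitzCofactor]
  ring

theorem hurwitzCofactor_add_five (t μ : ℝ) :
    hurwitzCofactor (t + 5) μ =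
      (2793600 + 1389600 * t + 229600 * t ^ 2 + 12600 * t ^ 3) +
      (14249760 + 10685800 * t + 2963200 * t ^ 2 + 360750 * t ^ 3 + 16290 * t ^ 4) * μ +
      (27455904 + 28336296 * t + 11467360 * t ^ 2 + 2280620 * t ^ 3 + 223341 * t ^ 4 +
        8629 * t ^ 5) * μ ^ 2 +
      (25039200 + 34107800 * t + 18799000 * t ^ 2 + 5394050 * t ^ 3 + 852900 * t ^ 4 +
        70650 * t ^ 5 + 2400 * t ^ 6) * μ ^ 3 +
      (10869600 + 19456760 * t + 14194460 * t ^ 2 + 5540580 * t ^ 3 + 1259550 * t ^ 4 +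
        167640 * t ^ 5 + 12140 * t ^ 6 + 370 * t ^ 7) * μ ^ 4 +
      (1854720 + 4688640 * t + 4606640 * t ^ 2 + 2407120 * t ^ 3 + 748000 * t ^ 4 +
        143310 * t ^ 5 + 16660 * t ^ 6 + 1080 * t ^ 7 + 30 * t ^ 8) * μ ^ 5 +
      (38400 + 292480 * t + 456160 * t ^ 2 + 335320 * t ^ 3 + 142316 * t ^ 4 + 37644 * t ^ 5 +
        6330 * t ^ 6 + 660 * t ^ 7 + 39 * t ^ 8 + t ^ 9) * μ ^ 6 := by
  simp only [hurwitzCofactor]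
  ring

theorem hurwitzCofactor_pos_of_five_le {m μ : ℝ} (hm : 5 ≤ m) (hμ : 0 < μ) :
    0 < hurwitzCofactor m μ := by
  obtain ⟨t, ht, rfl⟩ : ∃ t : ℝ, 0 ≤ t ∧ m = t + 5 := ⟨m - 5, by linarith, by ring⟩
  rw [hurwitzCofactor_add_five]
  positivity

theorem nonneg_iff_le_of_unique_pos_root {f : ℝ → ℝ} (hf : Continuous f) (h0 : 0 < f 0)
    {r R : ℝ} (huniq : ∀ x, 0 < x → f x = 0 → x = r) (hR : ∀ x, R ≤ x → f x < 0)
    {x : ℝ} (hx : 0 < x) : 0 ≤ f x ↔ x ≤ r := by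
  constructor
  · intro hfx
    by_contra! hrx
    have hfx' : 0 < f x := hfx.lt_of_ne fun h => hrx.ne' (huniq x hx h.symm)
    obtain ⟨y, hy, hfy⟩ := intermediate_value_Ioo' (le_max_left x R) hf.continuousOn
      ⟨hR _ (le_max_right x R), hfx'⟩
    exact (hrx.trans hy.1).ne' (huniq y (hx.trans hy.1) hfy)
  · intro hxr
    by_contra! hfx
    obtain ⟨y, hy, hfy⟩ := intermediate_value_Ioo' hx.le hf.continuousOn ⟨hfx, h0⟩
    exact (hy.2.trans_le hxr).ne (huniq y hy.1 hfy)

theorem exists_qCubic_neg_and_hurwitzCofactor_pos (m : ℕ) (hm1 : 1 ≤ m) (hm4 : m ≤ 4) :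
    ∃ R, (∀ x, R ≤ x → qCubic m x < 0) ∧ ∀ μ, 0 < μ → μ < R → 0 < hurwitzCofactor m μ := by
  -- `R` lies beyond the positive root of `q_m` and below the first positive root of `H(m, ·)`.
  interval_cases m
  · refine ⟨2, fun x hx => ?_, fun μ hμ hμR => ?_⟩
    · norm_num [qCubic]
      nlinarith
    · norm_num [hurwitzCofactor]
      nlinarith [mul_pos (sub_pos.mpr hμR) (show (0:ℝ) < 4 - μ by linarith)]
  · refine ⟨21 / 10, fun x hx => ?_, fun μ hμ hμR => ?_⟩
    · norm_num [qCubic]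
      nlinarith [mul_nonneg (sub_nonneg.mpr hx) (sq_nonneg (x - 21 / 10))]
    · norm_num [hurwitzCofactor]
      have hR := sub_pos.mpr hμR
      nlinarith [mul_pos (pow_pos hμ 2) hR, mul_pos (pow_pos hμ 3) hR, mul_pos (pow_pos hμ 4) hR,
        mul_pos (pow_pos hμ 5) hR, mul_pos hμ hR, pow_pos hμ 6]
  · refine ⟨11 / 4, fun x hx => ?_, fun μ hμ hμR => ?_⟩
    · norm_num [qCubic]
      nlinarith [mul_nonneg (sub_nonneg.mpr hx) (sq_nonneg (x - 11 / 4))]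
    · norm_num [hurwitzCofactor]
      have hR := sub_pos.mpr hμR
      nlinarith [mul_pos (pow_pos hμ 2) hR, mul_pos (pow_pos hμ 3) hR, mul_pos (pow_pos hμ 4) hR,
        mul_pos (pow_pos hμ 5) hR, mul_pos hμ hR]
  · refine ⟨22 / 5, fun x hx => ?_, fun μ hμ hμR => ?_⟩
    · norm_num [qCubic]
      nlinarith [mul_nonneg (sub_nonneg.mpr hx) (sq_nonneg (x - 22 / 5))]
    · norm_num [hurwitzCofactor]
      have hR := sub_pos.mpr hμR
      nlinarith [mul_pos (pow_pos hμ 3) hR, mul_pos (pow_pos hμ 4) hR, mul_pos (pow_pos hμ 5) hR]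

/-- Hurwitz determinant `Δ₃` for type `I_{1,4}`: `F_m(μ) > 0` for all `μ > 0`
when `m > 4`; for `1 ≤ m ≤ 4` and `μ > 0`, `F_m(μ) > 0 ∧ q_m¹(μ) ≥ 0` holds iff
`μ ≤ μ_m¹`, `μ_m¹` being the unique positive root of `q_m¹`. -/
theorem FI14_sign :
    (∀ m : ℕ, 4 < m → ∀ μ : ℝ, 0 < μ → 0 < FI14 m μ) ∧
    (∀ m : ℕ, 1 ≤ m → m ≤ 4 → ∀ r : ℝ, 0 < r → qI14' m r = 0 →
      (∀ x : ℝ, 0 < x → qI14' m x = 0 → x = r) →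
      ∀ μ : ℝ, 0 < μ → ((0 < FI14 m μ ∧ 0 ≤ qI14' m μ) ↔ μ ≤ r)) := by
  refine ⟨fun m hm μ hμ => ?_, fun m hm1 hm4 r hr hqr huniq μ hμ => ?_⟩
  · have := hurwitzCofactor_pos_of_five_le (by exact_mod_cast hm : (5 : ℝ) ≤ m) hμ
    rw [FI14_eq]
    positivity
  · obtain ⟨R, hqR, hH⟩ := exists_qCubic_neg_and_hurwitzCofactor_pos m hm1 hm4
    have hq : ∀ x, 0 < x → qI14' m x = qCubic m x := fun x hx => qI14'_eq_qCubic m hx.ne'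
    have hsign := nonneg_iff_le_of_unique_pos_root (by unfold qCubic; fun_prop)
      (by norm_num [qCubic]) (fun x hx hx0 => huniq x hx (by rwa [hq x hx])) hqR hμ
    have hrR : r < R := lt_of_not_ge fun h => (hqR r h).ne (by rwa [hq r hr] at hqr)
    rw [hq μ hμ, hsign, FI14_eq]
    refine ⟨And.right, fun hμr => ⟨?_, hμr⟩⟩
    have := hH μ hμ (hμr.trans_lt hrR)
    positivity
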